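/- arXiv:2512.09233 — 3 statements merged into one kernel-verified Lean document; each statement's English description precedes it below -/
import Mathlib

section
/- Shamir reconstruction: let q be prime and f : Polynomial (ZMod q) with f.natDegree < t, and let x₁, …, x_t be t distinct nonzero evaluation points in ZMod q. Then the secret f(0) equals the Lagrange combination ∑ i, f(xᵢ) * ∏_{j ≠ i} xⱼ / (xⱼ - xᵢ). In particular, the secret is determined by any t shares (xᵢ, f(xᵢ)). -/
/-- Shamir reconstruction: the secret f(0) equals the Lagrange combination of
any t shares at distinct nonzero points. -/
theorem shamir_reconstruction
    (q : ℕ) (hq : q.Prime) [Fact q.Prime]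
    (t : ℕ) (f : Polynomial (ZMod q)) (hf : f.natDegree < t)
    (x : Fin t → ZMod q) (hx : Function.Injective x)
    (hx0 : ∀ i, x i ≠ 0) :
    f.eval 0 = ∑ i, f.eval (x i) *
      ∏ j ∈ Finset.univ.erase i, x j / (x j - x i) := by
  have hinj : Set.InjOn x (Finset.univ : Finset (Fin t)) := fun a _ b _ h => hx h
  have hdeg : f.degree < (Finset.univ : Finset (Fin t)).card := by
    rw [Finset.card_univ, Fintype.card_fin]
    exact lt_of_le_of_lt Polynomial.degree_le_natDegree (by exact_mod_cast hf)
  have := Lagrange.eq_interpolate hinj hdeg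
  conv_lhs => rw [this]
  rw [Lagrange.interpolate_apply, Polynomial.eval_finset_sum]
  refine Finset.sum_congr rfl fun i _ => ?_
  rw [Polynomial.eval_mul, Polynomial.eval_C]
  congr 1
  rw [Lagrange.basis, Polynomial.eval_prod]
  refine Finset.prod_congr rfl fun j hj => ?_
  have hij : x i ≠ x j := fun h => (Finset.mem_erase.mp hj).1 (hx h.symm)
  rw [Lagrange.basisDivisor]
  simp only [Polynomial.eval_mul, Polynomial.eval_C, Polynomial.eval_sub, Polynomial.eval_X]
  rw [zero_sub, div_eq_mul_inv]
  rw [show x j - x i = -(x i - x j) by ring, ← neg_inv]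
  ring
end

section
/- In the Dolev–Yao derivation system, if S = {enc (atom a) k} and k⁻¹ ∉ DY(S), then atom a ∉ DY(S). -/
/-- Free term algebra over atoms T and keys K, with keys as terms. -/
inductive Term (T K : Type) : Type
  | atom : T → Term T K
  | key : K → Term T K
  | pair : Term T K → Term T K → Term T K
  | enc : Term T K → K → Term T K
  | hash : Term T K → Term T K

/-- Dolev–Yao derivability closure induced by the penetrator strands. -/
inductive DY {T K : Type} (inv : K → K) (S : Set (Term T K)) : Term T K → Prop
  | mem : ∀ t ∈ S, DY inv S t
  | pair : ∀ g h, DY inv S g → DY inv S h → DY inv S (Term.pair g h)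
  | fst : ∀ g h, DY inv S (Term.pair g h) → DY inv S g
  | snd : ∀ g h, DY inv S (Term.pair g h) → DY inv S h
  | enc : ∀ g k, DY inv S g → DY inv S (Term.key k) → DY inv S (Term.enc g k)
  | dec : ∀ g k, DY inv S (Term.enc g k) → DY inv S (Term.key (inv k)) → DY inv S g
  | hash : ∀ g, DY inv S g → DY inv S (Term.hash g)


def safe {T K : Type} (a : T) (k : K) : Term T K → Prop
  | Term.atom x => x ≠ a
  | Term.key _ => True
  | Term.pair g h => safe a k g ∧ safe a k h
  | Term.enc g k' => k' = k ∨ safe a k g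
  | Term.hash g => True

/-- Secrecy of atoms under encryption by unknown keys: if the adversary cannot
derive the inverse key, it cannot derive the atom protected by that key. -/
theorem atom_secrecy_under_unknown_key
    (T K : Type) (inv : K → K) (hinv : Function.Involutive inv)
    (a : T) (k : K)
    (hk : ¬ DY inv ({Term.enc (Term.atom a) k} : Set (Term T K)) (Term.key (inv k))) :
    ¬ DY inv ({Term.enc (Term.atom a) k} : Set (Term T K)) (Term.atom a) := by
  intro ha
  set S : Set (Term T K) := {Term.enc (Term.atom a) k}
  have main : ∀ t, DY inv S t → safe a k t := by
    intro t ht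
    induction ht with
    | mem t htS =>
        rcases htS with rfl
        exact Or.inl rfl
    | pair g h _ _ ihg ihh => exact ⟨ihg, ihh⟩
    | fst g h _ ih => exact ih.1
    | snd g h _ ih => exact ih.2
    | enc g k' _ _ ihg _ => exact Or.inr ihg
    | dec g k' hgk hkey ih _ =>
        rcases ih with rfl | hs
        · exact absurd hkey hk
        · exact hs
    | hash g _ _ => trivial
  exact (main _ ha) rfl
end

section
/- Rate-limit accounting soundness: let requests be a finite list of (timestamp, count) pairs recorded for a synthesizer, and let window(T, reqs) = sum of counts with timestamp in (T−24h, T]. If each individual enforcement check guarantees window(T, reqs_before ++ [(T, c)]) ≤ μ at the time each request of size c is accepted, and timestamps are nondecreasing, then at every time T the total accepted count within any 24-hour window never exceeds μ. -/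
/-- Sum of counts of log entries with timestamp in the window (T − 24, T]. -/
def windowSum (T : ℕ) (l : List (ℕ × ℕ)) : ℕ :=
  ((l.filter (fun p => decide (T < p.1 + 24 ∧ p.1 ≤ T))).map Prod.snd).sum

lemma sum_filter_mono {α : Type*} (f : α → ℕ) (p q : α → Bool) :
    ∀ l : List α, (∀ x ∈ l, p x = true → q x = true) →
    ((l.filter p).map f).sum ≤ ((l.filter q).map f).sum := by
  intro l
  induction l with
  | nil => simp
  | cons a t ih =>
    intro h
    have ht := ih (fun x hx => h x (List.mem_cons_of_mem a hx))
    by_cases hp : p a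
    · have hq := h a List.mem_cons_self hp
      simp only [List.filter_cons, hp, hq, if_true, List.map_cons, List.sum_cons]
      omega
    · by_cases hq : q a
      · simp only [List.filter_cons, hp, hq, if_true, if_false, Bool.false_eq_true,
          List.map_cons, List.sum_cons]
        omega
      · simp only [List.filter_cons, hp, hq, if_false, Bool.false_eq_true]
        exact ht

/-- Rate-limit accounting soundness: if every accepted request passes the
trailing-window check at its own timestamp, and timestamps are nondecreasing,
then every 24-hour window sum is bounded by μ. -/
theorem rate_limit_sound
    (μ : ℕ) (l : List (ℕ × ℕ))
    (hsorted : List.Chain' (· ≤ ·) (l.map Prod.fst))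
    (hcheck : ∀ (pre : List (ℕ × ℕ)) (tc : ℕ × ℕ) (suf : List (ℕ × ℕ)),
      l = pre ++ tc :: suf → windowSum tc.1 (pre ++ [tc]) ≤ μ) :
    ∀ T, windowSum T l ≤ μ := by
  revert hsorted hcheck
  induction l using List.reverseRecOn with
  | nil => intro _ _ T; simp [windowSum]
  | append_singleton l' tc ih =>
    intro hsorted hcheck T
    have hpair : (l'.map Prod.fst).Pairwise (· ≤ ·) := by
      have h := List.isChain_iff_pairwise.mp hsorted
      rw [List.map_append] at h
      exact (List.pairwise_append.mp h).1
    have hmono : ∀ p ∈ l', p.1 ≤ tc.1 := by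
      have h := List.isChain_iff_pairwise.mp hsorted
      rw [List.map_append] at h
      intro p hp
      exact (List.pairwise_append.mp h).2.2 p.1 (List.mem_map_of_mem (f := Prod.fst) hp)
        tc.1 (by simp)
    by_cases hT1 : tc.1 ≤ T
    · by_cases hT2 : T < tc.1 + 24
      · have hchk := hcheck l' tc [] (by simp)
        refine le_trans ?_ hchk
        unfold windowSum
        apply sum_filter_mono
        intro x hx hb
        have hx' : T < x.1 + 24 ∧ x.1 ≤ T := of_decide_eq_true hb
        rcases List.mem_append.mp hx with hxl | hxtc
        · exact decide_eq_true (by have := hmono x hxl; omega)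
        · simp at hxtc
          subst hxtc
          exact decide_eq_true (by omega)
      · have hnil : (l' ++ [tc]).filter
            (fun p => decide (T < p.1 + 24 ∧ p.1 ≤ T)) = [] := by
          apply List.filter_eq_nil_iff.mpr
          intro x hx
          rcases List.mem_append.mp hx with hxl | hxtc
          · have := hmono x hxl
            simp; omega
          · simp at hxtc; subst hxtc; simp; omega
        unfold windowSum
        rw [hnil]
        simp
    · push_neg at hT1
      have heq : windowSum T (l' ++ [tc]) = windowSum T l' := by
        unfold windowSum
        rw [List.filter_append]
        have hnot : ¬(T < tc.1 + 24 ∧ tc.1 ≤ T) := by omega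
        have : [tc].filter (fun p => decide (T < p.1 + 24 ∧ p.1 ≤ T)) = [] := by
          simp [hnot]
        rw [this, List.append_nil]
      rw [heq]
      apply ih
      · have h := List.isChain_iff_pairwise.mp hsorted
        rw [List.map_append] at h
        exact List.isChain_iff_pairwise.mpr (List.pairwise_append.mp h).1
      · intro pre tc' suf hsplit
        exact hcheck pre tc' (suf ++ [tc]) (by rw [hsplit]; simp)
end
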